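/- Let a, b be integers with 0 < b < a and let β be the unique real root greater than 1 of the polynomial P(X) = X^3 − aX^2 − bX + 1. Then L_⊗(β) ≥ 2; more precisely, there exist x, y ∈ ℤ_β with x·y ∈ fin(β) but β·(x·y) ∉ ℤ_β. -/

import Mathlib

open Polynomial

/-- The β-transformation `T_β(x) = βx - ⌊βx⌋`. -/
noncomputable def betaT (β : ℝ) : ℝ → ℝ := fun x => β * x - ⌊β * x⌋

/-- `fin(β)`: reals `x` such that `|x|/β^N ∈ [0,1)` and the greedy expansion of
`|x|/β^N` is finite, for some `N, n ∈ ℕ`. -/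
def finBeta (β : ℝ) : Set ℝ :=
  {x | ∃ N n : ℕ, |x| / β ^ N ∈ Set.Ico (0 : ℝ) 1 ∧ (betaT β)^[n] (|x| / β ^ N) = 0}

/-- `ℤ_β`: the set of β-integers. -/
def betaInt (β : ℝ) : Set ℝ :=
  {x | ∃ N : ℕ, |x| / β ^ N ∈ Set.Ico (0 : ℝ) 1 ∧ (betaT β)^[N] (|x| / β ^ N) = 0}

/-- `L_⊕(β)`: the least `L ∈ ℕ` such that `β^L·(x+y) ∈ ℤ_β` for all
`x, y ∈ ℤ_β` with `x + y ∈ fin(β)`. -/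
noncomputable def Lplus (β : ℝ) : ℕ :=
  sInf {L : ℕ | ∀ x ∈ betaInt β, ∀ y ∈ betaInt β,
    x + y ∈ finBeta β → β ^ L * (x + y) ∈ betaInt β}

/-- `L_⊗(β)`: the least `L ∈ ℕ` such that `β^L·(x·y) ∈ ℤ_β` for all
`x, y ∈ ℤ_β` with `x·y ∈ fin(β)`. -/
noncomputable def Lmul (β : ℝ) : ℕ :=
  sInf {L : ℕ | ∀ x ∈ betaInt β, ∀ y ∈ betaInt β,
    x * y ∈ finBeta β → β ^ L * (x * y) ∈ betaInt β}

/-!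
The root `β` is a Pisot unit: its conjugates `γ ∈ (0, 1)` and `δ ∈ (-1, 0)` are the other
roots of the cubic. A `β`-integer is a digit sum `∑ cⱼ βʲ` with digits in `[0, ⌊β⌋]`, so for
`x, y ∈ ℤ_β` the remainder of `|x y|` after its greedy integer digits is an element of `ℤ[β]`
lying in `[0, 1)` whose conjugates are bounded independently of `x` and `y`. Only finitely many
such elements exist, so the finite fractional expansions that occur have bounded length and the
set defining `L_⊗(β)` is nonempty. For the lower bound, `a` and `(a - 1) β + (b + 1)` are
`β`-integers whose product has the greedy expansion `(a-1) 1 b . (a-b-1) 1`, so multiplying it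
by `β` still leaves the fractional digit `1`.
-/

open Filter

section BetaTransformation

variable {β : ℝ}

lemma betaT_zero : betaT β 0 = 0 := by simp [betaT]

lemma betaT_mem_Ico (u : ℝ) : betaT β u ∈ Set.Ico (0 : ℝ) 1 :=
  ⟨Int.fract_nonneg _, Int.fract_lt_one _⟩

lemma iterate_betaT_mem_Ico {u : ℝ} (hu : u ∈ Set.Ico (0 : ℝ) 1) :
    ∀ n, (betaT β)^[n] u ∈ Set.Ico (0 : ℝ) 1
  | 0 => hu
  | n + 1 => by rw [Function.iterate_succ_apply']; exact betaT_mem_Ico _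

lemma betaT_eq_of_mul_eq {u v : ℝ} (d : ℤ) (h : β * u = d + v) (hv : v ∈ Set.Ico (0 : ℝ) 1) :
    betaT β u = v := by
  have hfloor : ⌊β * u⌋ = d := by
    rw [h, Int.floor_intCast_add, Int.floor_eq_zero_iff.2 hv, add_zero]
  rw [betaT, hfloor, h, add_sub_cancel_left]

lemma iterate_betaT_eq_zero_of_le {u : ℝ} {m n : ℕ} (h : (betaT β)^[m] u = 0) (hmn : m ≤ n) :
    (betaT β)^[n] u = 0 := by
  obtain ⟨k, rfl⟩ := Nat.exists_eq_add_of_le hmn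
  rw [add_comm, Function.iterate_add_apply, h, Function.iterate_fixed betaT_zero]

lemma betaT_intCast_mul_pow_add_div (hβ : 0 < β) (d : ℤ) {z : ℝ} {n : ℕ}
    (hz : z ∈ Set.Ico 0 (β ^ n)) :
    betaT β ((d * β ^ n + z) / β ^ (n + 1)) = z / β ^ n := by
  have hpow : 0 < β ^ n := pow_pos hβ n
  refine betaT_eq_of_mul_eq d ?_ ⟨div_nonneg hz.1 hpow.le, (div_lt_one hpow).2 hz.2⟩
  field_simp
  ring

lemma iterate_betaT_div_pow_add (hβ : 1 < β) {z : ℝ} {n : ℕ} (hz : z ∈ Set.Ico 0 (β ^ n))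
    (k : ℕ) : (betaT β)^[k] (z / β ^ (n + k)) = z / β ^ n := by
  induction k with
  | zero => rfl
  | succ k ih =>
    have hz' : z ∈ Set.Ico 0 (β ^ (n + k)) :=
      ⟨hz.1, hz.2.trans_le (pow_le_pow_right₀ hβ.le (Nat.le_add_right n k))⟩
    have hstep := betaT_intCast_mul_pow_add_div (zero_lt_one.trans hβ) 0 hz'
    rw [Int.cast_zero, zero_mul, zero_add] at hstep
    rw [Function.iterate_succ_apply, ← add_assoc, hstep, ih]

end BetaTransformation

section Digits

def digitSum (β : ℝ) (c : ℕ → ℤ) (n : ℕ) : ℝ := ∑ j ∈ Finset.range n, (c j : ℝ) * β ^ j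

variable {β : ℝ}

lemma digitSum_succ (c : ℕ → ℤ) (n : ℕ) :
    digitSum β c (n + 1) = c n * β ^ n + digitSum β c n := by
  rw [digitSum, Finset.sum_range_succ, add_comm, digitSum]

lemma digitSum_nonneg (hβ : 0 ≤ β) {c : ℕ → ℤ} (hc : ∀ j, 0 ≤ c j) (n : ℕ) :
    0 ≤ digitSum β c n :=
  Finset.sum_nonneg fun j _ => mul_nonneg (Int.cast_nonneg (hc j)) (pow_nonneg hβ j)

lemma exists_digits (hβ : 0 ≤ β) {u : ℝ} (hu : u ∈ Set.Ico (0 : ℝ) 1) (m : ℕ) :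
    ∃ c : ℕ → ℤ, (∀ j, c j ∈ Set.Icc 0 ⌊β⌋) ∧
      β ^ m * u = digitSum β c m + (betaT β)^[m] u := by
  induction m generalizing u with
  | zero => exact ⟨0, fun _ => ⟨le_rfl, Int.floor_nonneg.2 hβ⟩, by simp [digitSum]⟩
  | succ m ih =>
    obtain ⟨c, hc, heq⟩ := ih (betaT_mem_Ico u)
    refine ⟨Function.update c m ⌊β * u⌋, fun j => ?_, ?_⟩
    · rcases eq_or_ne j m with rfl | hj
      · rw [Function.update_self]
        exact ⟨Int.floor_nonneg.2 (mul_nonneg hβ hu.1),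
          Int.floor_le_floor (mul_le_of_le_one_right hβ hu.2.le)⟩
      · rw [Function.update_of_ne hj]
        exact hc j
    · have hlow : digitSum β (Function.update c m ⌊β * u⌋) m = digitSum β c m :=
        Finset.sum_congr rfl fun j hj => by
          rw [Function.update_of_ne (Finset.mem_range.1 hj).ne]
      rw [digitSum_succ, Function.update_self, hlow, Function.iterate_succ_apply, add_assoc,
        ← heq, betaT]
      ring

lemma digitSum_lt_pow (hβ : 0 < β) {c : ℕ → ℤ} {N : ℕ} (h0 : (c 0 : ℝ) < β)
    (hc : ∀ j, 1 ≤ j → j < N → (c j : ℝ) + 1 ≤ β) : ∀ k ≤ N, digitSum β c k < β ^ k := by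
  intro k hk
  induction k with
  | zero => simp [digitSum]
  | succ k ih =>
    rcases Nat.eq_zero_or_pos k with rfl | hk0
    · simpa [digitSum] using h0
    · calc digitSum β c (k + 1) = c k * β ^ k + digitSum β c k := digitSum_succ c k
        _ < c k * β ^ k + β ^ k := by gcongr; exact ih (by omega)
        _ = ((c k : ℝ) + 1) * β ^ k := by ring
        _ ≤ β ^ (k + 1) := by
          rw [pow_succ']
          exact mul_le_mul_of_nonneg_right (hc k hk0 (by omega)) (pow_pos hβ k).le

lemma iterate_betaT_digitSum_div_pow (hβ : 0 < β) {c : ℕ → ℤ} (hc : ∀ j, 0 ≤ c j) {n m : ℕ}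
    (hlt : ∀ k < n + m, digitSum β c k < β ^ k) :
    (betaT β)^[m] (digitSum β c (n + m) / β ^ (n + m)) = digitSum β c n / β ^ n := by
  induction m with
  | zero => rfl
  | succ m ih =>
    rw [← add_assoc, Function.iterate_succ_apply, digitSum_succ,
      betaT_intCast_mul_pow_add_div hβ _ ⟨digitSum_nonneg hβ.le hc _, hlt _ (by omega)⟩,
      ih fun k hk => hlt k (by omega)]

lemma digitSum_mem_betaInt (hβ : 0 < β) {c : ℕ → ℤ} (hc : ∀ j, 0 ≤ c j) {N : ℕ}
    (hlt : ∀ k ≤ N, digitSum β c k < β ^ k) : digitSum β c N ∈ betaInt β := by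
  have hpow : 0 < β ^ N := pow_pos hβ N
  have hs := digitSum_nonneg hβ.le hc N
  refine ⟨N, ?_, ?_⟩
  · rw [abs_of_nonneg hs]
    exact ⟨div_nonneg hs hpow.le, (div_lt_one hpow).2 (hlt N le_rfl)⟩
  · have := iterate_betaT_digitSum_div_pow hβ hc (n := 0) (m := N) fun k hk => hlt k (by omega)
    rw [abs_of_nonneg hs]
    simpa [digitSum] using this

end Digits

section BetaIntegers

variable {β : ℝ}

lemma abs_eq_digitSum_of_mem_betaInt (hβ : 1 < β) {x : ℝ} (hx : x ∈ betaInt β) :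
    ∃ N : ℕ, ∃ c : ℕ → ℤ, (∀ j, c j ∈ Set.Icc 0 ⌊β⌋) ∧ |x| < β ^ N ∧ |x| = digitSum β c N := by
  obtain ⟨N, hN, hT⟩ := hx
  have hpow : 0 < β ^ N := pow_pos (zero_lt_one.trans hβ) N
  obtain ⟨c, hc, heq⟩ := exists_digits (zero_le_one.trans hβ.le) hN N
  rw [hT, add_zero, mul_div_cancel₀ _ hpow.ne'] at heq
  exact ⟨N, c, hc, (div_lt_one hpow).1 hN.2, heq⟩

lemma iterate_betaT_eq_zero_of_mem_betaInt (hβ : 1 < β) {z : ℝ} (hz : z ∈ betaInt β) {n : ℕ}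
    (hn : |z| < β ^ n) : (betaT β)^[n] (|z| / β ^ n) = 0 := by
  obtain ⟨N, hN, hT⟩ := hz
  have hzN : |z| ∈ Set.Ico 0 (β ^ N) :=
    ⟨abs_nonneg z, (div_lt_one (pow_pos (zero_lt_one.trans hβ) N)).1 hN.2⟩
  rcases le_total N n with h | h
  · obtain ⟨k, rfl⟩ := Nat.exists_eq_add_of_le h
    rw [Function.iterate_add_apply, iterate_betaT_div_pow_add hβ hzN, hT]
  · obtain ⟨k, rfl⟩ := Nat.exists_eq_add_of_le h
    rw [← iterate_betaT_div_pow_add hβ ⟨abs_nonneg z, hn⟩ k, ← Function.iterate_add_apply, hT]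

lemma exists_iterate_betaT_eq_zero_of_mem_finBeta (hβ : 1 < β) {z : ℝ} (hz : z ∈ finBeta β)
    {n : ℕ} (hn : |z| < β ^ n) : ∃ k, (betaT β)^[k] (|z| / β ^ n) = 0 := by
  obtain ⟨N, m, hN, hT⟩ := hz
  have hzN : |z| ∈ Set.Ico 0 (β ^ N) :=
    ⟨abs_nonneg z, (div_lt_one (pow_pos (zero_lt_one.trans hβ) N)).1 hN.2⟩
  rcases le_total N n with h | h
  · obtain ⟨k, rfl⟩ := Nat.exists_eq_add_of_le h
    exact ⟨m + k, by rw [Function.iterate_add_apply, iterate_betaT_div_pow_add hβ hzN, hT]⟩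
  · obtain ⟨k, rfl⟩ := Nat.exists_eq_add_of_le h
    refine ⟨m, ?_⟩
    rw [← iterate_betaT_div_pow_add hβ ⟨abs_nonneg z, hn⟩ k, ← Function.iterate_add_apply,
      add_comm, Function.iterate_add_apply, hT, Function.iterate_fixed betaT_zero]

lemma beta_mul_mem_betaInt (hβ : 1 < β) {z : ℝ} (hz : z ∈ betaInt β) : β * z ∈ betaInt β := by
  have hβ0 : 0 < β := zero_lt_one.trans hβ
  obtain ⟨N, hN, hT⟩ := hz
  have hscale : |β * z| / β ^ (N + 1) = |z| / β ^ N := by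
    rw [abs_mul, abs_of_pos hβ0, pow_succ']
    field_simp
  refine ⟨N + 1, hscale ▸ hN, ?_⟩
  rw [hscale, Function.iterate_succ_apply', hT, betaT_zero]

end BetaIntegers

section Cubic

lemma exists_roots_mem_Ioo_of_cubic {a b : ℤ} (hb : 0 < b) (hba : b < a) :
    ∃ γ δ : ℝ, γ ∈ Set.Ioo 0 1 ∧ δ ∈ Set.Ioo (-1) 0 ∧
      γ ^ 3 - a * γ ^ 2 - b * γ + 1 = 0 ∧ δ ^ 3 - a * δ ^ 2 - b * δ + 1 = 0 := by
  have hb1 : (1 : ℝ) ≤ b := by exact_mod_cast hb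
  have hba' : (b : ℝ) + 1 ≤ a := by exact_mod_cast hba
  have hF : Continuous fun t : ℝ => t ^ 3 - a * t ^ 2 - b * t + 1 := by fun_prop
  obtain ⟨γ, hγ, hγ0⟩ := intermediate_value_Ioo' zero_le_one hF.continuousOn
    (show (0 : ℝ) ∈ Set.Ioo _ _ by norm_num; linarith)
  obtain ⟨δ, hδ, hδ0⟩ := intermediate_value_Ioo (by norm_num : (-1 : ℝ) ≤ 0) hF.continuousOn
    (show (0 : ℝ) ∈ Set.Ioo _ _ by norm_num; linarith)
  exact ⟨γ, δ, hγ, hδ, hγ0, hδ0⟩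

lemma intCast_lt_of_cubic_eq_zero {a b : ℤ} (hb : 0 < b) {β : ℝ} (hβ : 1 < β)
    (hroot : β ^ 3 - a * β ^ 2 - b * β + 1 = 0) : (a : ℝ) < β := by
  have hb1 : (1 : ℝ) ≤ b := by exact_mod_cast hb
  have hfactor : β ^ 2 * (β - a) = b * β - 1 := by linear_combination hroot
  have hpos : 0 < β ^ 2 * (β - a) := by rw [hfactor]; nlinarith
  linarith [pos_of_mul_pos_right hpos (sq_nonneg β)]

end Cubic

section QuadraticCoordinates

noncomputable def quadEval (t : ℝ) (v : ℤ × ℤ × ℤ) : ℝ := v.1 + v.2.1 * t + v.2.2 * t ^ 2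

lemma exists_quadEval_eq_aeval (a b : ℤ) (q : ℤ[X]) :
    ∃ v : ℤ × ℤ × ℤ, ∀ t : ℝ, t ^ 3 - a * t ^ 2 - b * t + 1 = 0 → aeval t q = quadEval t v := by
  induction q using Polynomial.induction_on with
  | C c => exact ⟨(c, 0, 0), fun t _ => by simp [quadEval]⟩
  | add p q hp hq =>
    obtain ⟨v, hv⟩ := hp
    obtain ⟨w, hw⟩ := hq
    refine ⟨v + w, fun t ht => ?_⟩
    rw [map_add, hv t ht, hw t ht]
    simp only [quadEval, Prod.fst_add, Prod.snd_add, Int.cast_add]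
    ring
  | monomial n c hp =>
    obtain ⟨⟨p, q, r⟩, hv⟩ := hp
    -- multiplication by `t` in the basis `1, t, t²`, using `t³ = a t² + b t - 1`
    refine ⟨(-r, p + b * r, q + a * r), fun t ht => ?_⟩
    rw [pow_succ, ← mul_assoc, map_mul, hv t ht, aeval_X]
    simp only [quadEval]
    push_cast
    linear_combination (r : ℝ) * ht

lemma finite_setOf_mul_eq_linear_combination {D : ℝ} (hD : D ≠ 0) (l₁ l₂ l₃ C : ℝ) :
    {z : ℤ | ∃ e₁ e₂ e₃ : ℝ, |e₁| ≤ C ∧ |e₂| ≤ C ∧ |e₃| ≤ C ∧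
      D * z = l₁ * e₁ + l₂ * e₂ + l₃ * e₃}.Finite := by
  set K := (|l₁| + |l₂| + |l₃|) * C / |D|
  refine (Set.finite_Icc (-⌈K⌉) ⌈K⌉).subset ?_
  rintro z ⟨e₁, e₂, e₃, h₁, h₂, h₃, hz⟩
  have hzK : |(z : ℝ)| ≤ K := by
    rw [le_div_iff₀ (abs_pos.2 hD), ← abs_mul, mul_comm, hz]
    calc |l₁ * e₁ + l₂ * e₂ + l₃ * e₃| ≤ |l₁| * |e₁| + |l₂| * |e₂| + |l₃| * |e₃| := by
          simp only [← abs_mul]; exact abs_add_three _ _ _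
      _ ≤ (|l₁| + |l₂| + |l₃|) * C := by
          nlinarith [abs_nonneg l₁, abs_nonneg l₂, abs_nonneg l₃]
  have hK := Int.le_ceil K
  rw [abs_le] at hzK
  rw [Set.mem_Icc, ← Int.cast_le (R := ℝ), ← Int.cast_le (R := ℝ), Int.cast_neg]
  exact ⟨by linarith, by linarith⟩

lemma finite_setOf_abs_quadEval_le {t₁ t₂ t₃ : ℝ} (h₁₂ : t₁ ≠ t₂) (h₁₃ : t₁ ≠ t₃)
    (h₂₃ : t₂ ≠ t₃) (C : ℝ) :
    {v : ℤ × ℤ × ℤ | |quadEval t₁ v| ≤ C ∧ |quadEval t₂ v| ≤ C ∧ |quadEval t₃ v| ≤ C}.Finite := by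
  have hD : (t₁ - t₂) * (t₁ - t₃) * (t₂ - t₃) ≠ 0 := by simp [sub_ne_zero, *]
  have hfin := fun l₁ l₂ l₃ => finite_setOf_mul_eq_linear_combination hD l₁ l₂ l₃ C
  -- Cramer's rule for the Vandermonde system `quadEval tᵢ (p, q, r) = eᵢ`
  refine ((hfin (t₂ * t₃ * (t₂ - t₃)) (-(t₁ * t₃ * (t₁ - t₃))) (t₁ * t₂ * (t₁ - t₂))).prod
    ((hfin (t₃ ^ 2 - t₂ ^ 2) (t₁ ^ 2 - t₃ ^ 2) (t₂ ^ 2 - t₁ ^ 2)).prod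
      (hfin (t₂ - t₃) (t₃ - t₁) (t₁ - t₂)))).subset ?_
  rintro ⟨p, q, r⟩ ⟨h₁, h₂, h₃⟩
  exact ⟨⟨_, _, _, h₁, h₂, h₃, by simp only [quadEval]; ring⟩,
    ⟨_, _, _, h₁, h₂, h₃, by simp only [quadEval]; ring⟩,
    ⟨_, _, _, h₁, h₂, h₃, by simp only [quadEval]; ring⟩⟩

end QuadraticCoordinates

section Finiteness

variable {β : ℝ}

lemma abs_digitSum_le {t g : ℝ} (hg : g < 1) (ht : |t| ≤ g) {c : ℕ → ℤ} {B : ℤ}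
    (hc : ∀ j, c j ∈ Set.Icc 0 B) (n : ℕ) : |digitSum t c n| ≤ B / (1 - g) := by
  have hg0 : 0 ≤ g := (abs_nonneg t).trans ht
  have hB : (0 : ℝ) ≤ B := Int.cast_nonneg ((hc 0).1.trans (hc 0).2)
  calc |digitSum t c n| ≤ ∑ j ∈ Finset.range n, |(c j : ℝ) * t ^ j| :=
        Finset.abs_sum_le_sum_abs _ _
    _ ≤ ∑ j ∈ Finset.range n, (B : ℝ) * g ^ j := by
        refine Finset.sum_le_sum fun j _ => ?_
        rw [abs_mul, abs_pow, abs_of_nonneg (Int.cast_nonneg (hc j).1)]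
        exact mul_le_mul (Int.cast_le.2 (hc j).2) (pow_le_pow_left₀ (abs_nonneg t) ht j)
          (by positivity) hB
    _ = B * ∑ j ∈ Finset.Ico 0 n, g ^ j := by rw [Finset.mul_sum, Finset.range_eq_Ico]
    _ ≤ B * (g ^ 0 / (1 - g)) := by gcongr; exact geom_sum_Ico_le_of_lt_one hg0 hg
    _ = B / (1 - g) := by ring

lemma abs_digitSum_mul_sub_le {t g : ℝ} (hg : g < 1) (ht : |t| ≤ g) {B : ℤ}
    {c c' d : ℕ → ℤ} (hc : ∀ j, c j ∈ Set.Icc 0 B) (hc' : ∀ j, c' j ∈ Set.Icc 0 B)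
    (hd : ∀ j, d j ∈ Set.Icc 0 B) (n₁ n₂ n : ℕ) :
    |digitSum t c n₁ * digitSum t c' n₂ - digitSum t d n| ≤ (B / (1 - g) + 1) ^ 2 := by
  have h₁ := abs_digitSum_le hg ht hc n₁
  have h₂ := abs_digitSum_le hg ht hc' n₂
  have h₃ := abs_digitSum_le hg ht hd n
  have hM : 0 ≤ (B : ℝ) / (1 - g) := (abs_nonneg _).trans h₃
  calc _ ≤ |digitSum t c n₁| * |digitSum t c' n₂| + |digitSum t d n| := by
        rw [← abs_mul]; exact abs_sub _ _
    _ ≤ B / (1 - g) * (B / (1 - g)) + B / (1 - g) := by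
        gcongr
    _ ≤ (B / (1 - g) + 1) ^ 2 := by nlinarith

noncomputable def digitPoly (c : ℕ → ℤ) (n : ℕ) : ℤ[X] := ∑ j ∈ Finset.range n, C (c j) * X ^ j

lemma aeval_digitPoly (t : ℝ) (c : ℕ → ℤ) (n : ℕ) : aeval t (digitPoly c n) = digitSum t c n := by
  simp [digitPoly, digitSum]

theorem exists_finite_set_iterate_betaT_mul {a b : ℤ} (hb : 0 < b) (hba : b < a) (hβ : 1 < β)
    (hroot : β ^ 3 - a * β ^ 2 - b * β + 1 = 0) :
    ∃ F : Set ℝ, F.Finite ∧ ∀ x ∈ betaInt β, ∀ y ∈ betaInt β,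
      ∃ N : ℕ, |x * y| < β ^ N ∧ (betaT β)^[N] (|x * y| / β ^ N) ∈ F := by
  have hβ0 : 0 < β := zero_lt_one.trans hβ
  obtain ⟨γ, δ, hγ, hδ, hγroot, hδroot⟩ := exists_roots_mem_Ioo_of_cubic hb hba
  set g := max γ (-δ)
  have hg : g < 1 := max_lt hγ.2 (by linarith [hδ.1])
  set K := ((⌊β⌋ : ℝ) / (1 - g) + 1) ^ 2
  have hK : 1 ≤ K := by
    have : 0 ≤ (⌊β⌋ : ℝ) / (1 - g) :=
      div_nonneg (Int.cast_nonneg (Int.floor_nonneg.2 hβ0.le)) (by linarith)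
    nlinarith
  refine ⟨quadEval β '' {v | |quadEval β v| ≤ K ∧ |quadEval γ v| ≤ K ∧ |quadEval δ v| ≤ K},
    (finite_setOf_abs_quadEval_le (by linarith [hγ.2]) (by linarith [hδ.2])
      (by linarith [hγ.1, hδ.2]) K).image _, fun x hx y hy => ?_⟩
  obtain ⟨N₁, c, hc, hx, hxc⟩ := abs_eq_digitSum_of_mem_betaInt hβ hx
  obtain ⟨N₂, c', hc', hy, hyc⟩ := abs_eq_digitSum_of_mem_betaInt hβ hy
  have hpow : 0 < β ^ (N₁ + N₂) := pow_pos hβ0 _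
  have hxy : |x * y| < β ^ (N₁ + N₂) := by
    rw [abs_mul, pow_add]
    exact mul_lt_mul'' hx hy (abs_nonneg x) (abs_nonneg y)
  have hu : |x * y| / β ^ (N₁ + N₂) ∈ Set.Ico (0 : ℝ) 1 :=
    ⟨div_nonneg (abs_nonneg _) hpow.le, (div_lt_one hpow).2 hxy⟩
  obtain ⟨d, hd, hdeq⟩ := exists_digits hβ0.le hu (N₁ + N₂)
  rw [mul_div_cancel₀ _ hpow.ne'] at hdeq
  obtain ⟨v, hv⟩ := exists_quadEval_eq_aeval a b
    (digitPoly c N₁ * digitPoly c' N₂ - digitPoly d (N₁ + N₂))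
  have hconj : ∀ t : ℝ, |t| ≤ g → t ^ 3 - a * t ^ 2 - b * t + 1 = 0 → |quadEval t v| ≤ K :=
    fun t ht hroot => by
      rw [← hv t hroot, map_sub, map_mul, aeval_digitPoly, aeval_digitPoly, aeval_digitPoly]
      exact abs_digitSum_mul_sub_le hg ht hc hc' hd _ _ _
  have hfrac : quadEval β v = (betaT β)^[N₁ + N₂] (|x * y| / β ^ (N₁ + N₂)) := by
    rw [← hv β hroot, map_sub, map_mul, aeval_digitPoly, aeval_digitPoly, aeval_digitPoly]
    rw [abs_mul, hxc, hyc] at hdeq ⊢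
    linarith
  refine ⟨N₁ + N₂, hxy, v, ⟨?_, hconj γ ?_ hγroot, hconj δ ?_ hδroot⟩, hfrac⟩
  · have := iterate_betaT_mem_Ico (β := β) hu (N₁ + N₂)
    rw [hfrac, abs_of_nonneg this.1]
    exact this.2.le.trans hK
  · rw [abs_of_pos hγ.1]
    exact le_max_left _ _
  · rw [abs_of_neg hδ.2]
    exact le_max_right _ _

lemma exists_iterate_betaT_eq_zero_of_finite {F : Set ℝ} (hF : F.Finite) :
    ∃ L : ℕ, ∀ u ∈ F, (∃ k, (betaT β)^[k] u = 0) → (betaT β)^[L] u = 0 := by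
  refine (hF.eventually_all.2 fun u _ => ?_).exists (f := atTop)
  by_cases h : ∃ k, (betaT β)^[k] u = 0
  · obtain ⟨k, hk⟩ := h
    filter_upwards [eventually_ge_atTop k] with L hL _ using iterate_betaT_eq_zero_of_le hk hL
  · exact Eventually.of_forall fun _ h' => absurd h' h

theorem exists_pow_mul_mem_betaInt {a b : ℤ} (hb : 0 < b) (hba : b < a) (hβ : 1 < β)
    (hroot : β ^ 3 - a * β ^ 2 - b * β + 1 = 0) :
    ∃ L : ℕ, ∀ x ∈ betaInt β, ∀ y ∈ betaInt β,
      x * y ∈ finBeta β → β ^ L * (x * y) ∈ betaInt β := by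
  have hβ0 : 0 < β := zero_lt_one.trans hβ
  obtain ⟨F, hF, hmem⟩ := exists_finite_set_iterate_betaT_mul hb hba hβ hroot
  obtain ⟨L, hL⟩ := exists_iterate_betaT_eq_zero_of_finite (β := β) hF
  refine ⟨L, fun x hx y hy hfin => ?_⟩
  obtain ⟨N, hN, hNF⟩ := hmem x hx y hy
  obtain ⟨k, hk⟩ := exists_iterate_betaT_eq_zero_of_mem_finBeta hβ hfin hN
  have hscale : |β ^ L * (x * y)| / β ^ (L + N) = |x * y| / β ^ N := by
    rw [abs_mul, abs_pow, abs_of_pos hβ0, pow_add]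
    field_simp
  refine ⟨L + N, ?_, ?_⟩
  · rw [hscale]
    exact ⟨div_nonneg (abs_nonneg _) (pow_pos hβ0 N).le, (div_lt_one (pow_pos hβ0 N)).2 hN⟩
  · rw [hscale, Function.iterate_add_apply]
    refine hL _ hNF ⟨k, ?_⟩
    rw [← Function.iterate_add_apply, add_comm, Function.iterate_add_apply, hk,
      Function.iterate_fixed betaT_zero]

end Finiteness

section Witness

variable {β : ℝ}

lemma getD_nonneg {l : List ℤ} (hl : ∀ d ∈ l, 0 ≤ d) (j : ℕ) : 0 ≤ l.getD j 0 := by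
  rw [List.getD_eq_getElem?_getD]
  cases h : l[j]? with
  | none => rfl
  | some d => exact hl d (List.mem_of_getElem? h)

theorem exists_mul_mem_finBeta_beta_mul_not_mem_betaInt {a b : ℤ} (hb : 0 < b) (hba : b < a)
    (hβ : 1 < β) (hroot : β ^ 3 - a * β ^ 2 - b * β + 1 = 0) :
    ∃ x ∈ betaInt β, ∃ y ∈ betaInt β, x * y ∈ finBeta β ∧ β * (x * y) ∉ betaInt β := by
  have hβ0 : 0 < β := zero_lt_one.trans hβ
  have hb1 : (1 : ℝ) ≤ b := by exact_mod_cast hb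
  have hba' : (b : ℝ) + 1 ≤ a := by exact_mod_cast hba
  have haβ : (a : ℝ) < β := intCast_lt_of_cubic_eq_zero hb hβ hroot
  -- digit lists start at the coefficient of `β ^ 0`
  set cx : ℕ → ℤ := fun j => [a].getD j 0
  set cy : ℕ → ℤ := fun j => [b + 1, a - 1].getD j 0
  set cz : ℕ → ℤ := fun j => [1, a - b - 1, b, 1, a - 1].getD j 0
  have hcx : ∀ j, 0 ≤ cx j := getD_nonneg <| by
    simp only [List.mem_singleton, forall_eq]; omega
  have hcy : ∀ j, 0 ≤ cy j := getD_nonneg <| by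
    simp only [List.mem_cons, List.not_mem_nil, or_false, forall_eq_or_imp, forall_eq]; omega
  have hcz : ∀ j, 0 ≤ cz j := getD_nonneg <| by
    simp only [List.mem_cons, List.not_mem_nil, or_false, forall_eq_or_imp, forall_eq]; omega
  have hx : ∀ k ≤ 1, digitSum β cx k < β ^ k :=
    digitSum_lt_pow hβ0 (by simpa [cx] using haβ) (by intro j hj1 hj; omega)
  have hy : ∀ k ≤ 2, digitSum β cy k < β ^ k :=
    digitSum_lt_pow hβ0 (by simp only [cy, List.getD_cons_zero]; push_cast; linarith)
      fun j hj1 hj => by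
        obtain rfl : j = 1 := by omega
        simp only [cy, List.getD_cons_succ, List.getD_cons_zero]; push_cast; linarith
  have hz : ∀ k ≤ 5, digitSum β cz k < β ^ k :=
    digitSum_lt_pow hβ0 (by simp only [cz, List.getD_cons_zero]; push_cast; linarith)
      fun j hj1 hj => by
        interval_cases j <;> simp only [cz, List.getD_cons_succ, List.getD_cons_zero] <;>
          push_cast <;> linarith
  -- the product of `a` and `(a - 1) β + (b + 1)`, reduced with `β³ = a β² + b β - 1`
  have hprod : digitSum β cx 1 * digitSum β cy 2 = digitSum β cz 5 / β ^ 2 := by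
    rw [eq_div_iff (pow_pos hβ0 2).ne']
    simp only [digitSum, Finset.sum_range_succ, Finset.sum_range_zero, cx, cy, cz,
      List.getD_cons_succ, List.getD_cons_zero]
    push_cast
    linear_combination (1 - (a : ℝ)) * β * hroot - hroot
  have hZ : 0 ≤ digitSum β cz 5 := digitSum_nonneg hβ0.le hcz 5
  have hz5 : digitSum β cz 5 / β ^ 5 ∈ Set.Ico (0 : ℝ) 1 :=
    ⟨by positivity, (div_lt_one (by positivity)).2 (hz 5 le_rfl)⟩
  refine ⟨_, digitSum_mem_betaInt hβ0 hcx hx, _, digitSum_mem_betaInt hβ0 hcy hy, ⟨3, 5, ?_⟩,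
    fun hmem => ?_⟩
  · have hscale : |digitSum β cx 1 * digitSum β cy 2| / β ^ 3 = digitSum β cz 5 / β ^ 5 := by
      rw [hprod, abs_of_nonneg (by positivity)]
      field_simp
    rw [hscale]
    refine ⟨hz5, ?_⟩
    have := iterate_betaT_digitSum_div_pow hβ0 hcz (n := 0) (m := 5) fun k hk => hz k (by omega)
    simpa [digitSum] using this
  · have hscale :
        |β * (digitSum β cx 1 * digitSum β cy 2)| / β ^ 4 = digitSum β cz 5 / β ^ 5 := by
      rw [hprod, abs_of_nonneg (by positivity)]
      field_simp
    have := iterate_betaT_eq_zero_of_mem_betaInt hβ hmem (n := 4)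
      ((div_lt_one (by positivity)).1 (hscale ▸ hz5.2))
    rw [hscale, show 5 = 1 + 4 from rfl,
      iterate_betaT_digitSum_div_pow hβ0 hcz fun k hk => hz k (by omega)] at this
    simp [digitSum, cz, hβ0.ne'] at this

end Witness

theorem stmt12 (a b : ℤ) (hb : 0 < b) (hba : b < a) (β : ℝ) (hβ : 1 < β)
    (hroot : β ^ 3 - (a : ℝ) * β ^ 2 - (b : ℝ) * β + 1 = 0) :
    2 ≤ Lmul β ∧
    ∃ x ∈ betaInt β, ∃ y ∈ betaInt β,
      x * y ∈ finBeta β ∧ β * (x * y) ∉ betaInt β := by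
  obtain ⟨x, hx, y, hy, hxy, hβxy⟩ :=
    exists_mul_mem_finBeta_beta_mul_not_mem_betaInt hb hba hβ hroot
  refine ⟨?_, x, hx, y, hy, hxy, hβxy⟩
  have hmem : β ^ Lmul β * (x * y) ∈ betaInt β :=
    Nat.sInf_mem (exists_pow_mul_mem_betaInt hb hba hβ hroot) x hx y hy hxy
  by_contra! hL
  obtain h | h : Lmul β = 0 ∨ Lmul β = 1 := by omega
  · rw [h, pow_zero, one_mul] at hmem
    exact hβxy (beta_mul_mem_betaInt hβ hmem)
  · rw [h, pow_one] at hmem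
    exact hβxy hmem
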